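/- arXiv:1402.0401 — 7 statements merged into one kernel-verified Lean document; each statement's English description precedes it below -/
import Mathlib

section
/- Let G be a finitely generated group and let H be a subgroup of G of finite index. Then rk(H) ≤ [G:H] · (rk(G) − 1) + 1; in particular H is finitely generated. -/
/-- The rank of a subgroup: the minimal cardinality of a finite generating set. -/
noncomputable def Subgroup.rk {G : Type*} [Group G] (H : Subgroup G) : ℕ :=
  sInf {n : ℕ | ∃ S : Finset G, Subgroup.closure (S : Set G) = H ∧ S.card = n}

/-!
If `R ∋ 1` is a right transversal of `H` and `S` generates `G`, Schreier's lemma says that `H` is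
generated by the `#R * #S` elements `r * s * (representative of H r s)⁻¹`. If the pairs `(r, s)`
with `r * s ∈ R` contain a spanning tree of the Schreier graph on the `[G:H]` right cosets, at
least `[G:H] - 1` of these generators are trivial, which leaves at most
`[G:H] * #S - ([G:H] - 1) = [G:H] * (#S - 1) + 1` of them. Such a transversal is grown from `{1}`
one coset at a time: as long as some coset is missed, some edge of the Schreier graph leaves the
cosets already reached, because `S` generates `G`.
-/

open Finset Subgroup
open scoped Pointwise

theorem Subgroup.rk_top {G : Type*} [Group G] [Group.FG G] :
    (⊤ : Subgroup G).rk = Group.rank G := by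
  obtain ⟨S, hScard, hS⟩ := Group.rank_spec G
  refine le_antisymm (Nat.sInf_le ⟨S, hS, hScard⟩) (le_csInf ⟨_, S, hS, rfl⟩ ?_)
  rintro n ⟨T, hT, rfl⟩
  exact Group.rank_le hT

theorem Finset.card_erase_image_le {α β : Type*} [DecidableEq α] [DecidableEq β] (f : α → β)
    (s t : Finset α) {b : β} (ht : ∀ a ∈ t, f a = b) : #((s.image f).erase b) ≤ #(s \ t) := by
  refine (card_le_card (t := (s \ t).image f) fun y hy => ?_).trans card_image_le
  obtain ⟨hyb, hy⟩ := mem_erase.mp hy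
  obtain ⟨a, ha, rfl⟩ := mem_image.mp hy
  exact mem_image_of_mem f (mem_sdiff.mpr ⟨ha, fun hat => hyb (ht a hat)⟩)

section

variable {G : Type*} [Group G]

theorem Subgroup.card_le_index_of_mul_inv_mem {H : Subgroup G} [H.FiniteIndex] {R : Finset G}
    (hR : ∀ a ∈ R, ∀ b ∈ R, a * b⁻¹ ∈ H → a = b) : #R ≤ H.index := by
  let := H.fintypeQuotientOfFiniteIndex
  have hinj : (R : Set G).InjOn fun g => (QuotientGroup.mk g⁻¹ : G ⧸ H) := fun a ha b hb hab => by
    refine hR a ha b hb ?_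
    simpa using QuotientGroup.eq.mp hab
  calc #R ≤ #(univ : Finset (G ⧸ H)) := card_le_card_of_injOn _ (fun _ _ => mem_univ _) hinj
    _ = H.index := by rw [card_univ, index_eq_card, Nat.card_eq_fintype_card]

theorem Subgroup.isComplement_of_mul_inv_mem {H : Subgroup G} {R : Set G}
    (hinj : ∀ a ∈ R, ∀ b ∈ R, a * b⁻¹ ∈ H → a = b) (hcov : ∀ g, ∃ r ∈ R, g * r⁻¹ ∈ H) :
    IsComplement (H : Set G) R := by
  refine isComplement_iff_existsUnique_mul_inv_mem.mpr fun g => ?_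
  obtain ⟨r, hr, hgr⟩ := hcov g
  refine ⟨⟨r, hr⟩, hgr, fun r' hgr' => Subtype.ext (hinj _ r'.2 _ hr ?_)⟩
  simpa [mul_assoc] using H.mul_mem (H.inv_mem hgr') hgr

theorem Subgroup.IsComplement.toRightFun_eq_self {H : Subgroup G} {R : Set G}
    (hR : IsComplement (H : Set G) R) {g : G} (hg : g ∈ R) : (hR.toRightFun g : G) = g := by
  have := (isComplement_iff_existsUnique_mul_inv_mem.mp hR g).unique
    (hR.mul_inv_toRightFun_mem g) (y₂ := ⟨g, hg⟩) (by simp)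
  exact congrArg Subtype.val this

theorem Subgroup.mem_of_closure_eq_top {S X : Set G} (hS : closure S = ⊤) (h1 : (1 : G) ∈ X)
    (hmul : ∀ x ∈ X, ∀ s ∈ S, x * s ∈ X) (hmul_inv : ∀ x ∈ X, ∀ s ∈ S, x * s⁻¹ ∈ X) (g : G) :
    g ∈ X :=
  closure_induction_right (p := fun x _ => x ∈ X) h1 (fun x _ s hs hx => hmul x hx s hs)
    (fun x _ s hs hx => hmul_inv x hx s hs) (hS ▸ mem_top g)

variable [DecidableEq G]

def mulMemPairs (R S : Finset G) : Finset (G × G) :=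
  (R ×ˢ S).filter fun p => p.1 * p.2 ∈ R

@[simp]
theorem mem_mulMemPairs {R S : Finset G} {p : G × G} :
    p ∈ mulMemPairs R S ↔ p.1 ∈ R ∧ p.2 ∈ S ∧ p.1 * p.2 ∈ R := by
  simp [mulMemPairs, and_assoc]

theorem mulMemPairs_mono {R R' S : Finset G} (h : R ⊆ R') : mulMemPairs R S ⊆ mulMemPairs R' S :=
  fun p hp => by
    rw [mem_mulMemPairs] at hp ⊢
    exact ⟨h hp.1, hp.2.1, h hp.2.2⟩

theorem mulMemPairs_subset_product (R S : Finset G) : mulMemPairs R S ⊆ R ×ˢ S :=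
  filter_subset _ _

theorem Subgroup.exists_closure_eq_card_add_card_mulMemPairs_le {H : Subgroup G}
    {R S : Finset G} (hR : IsComplement (H : Set G) R) (hR1 : (1 : G) ∈ R)
    (hS : closure (S : Set G) = ⊤) :
    ∃ T : Finset G, closure (T : Set G) = H ∧ #T + #(mulMemPairs R S) ≤ #R * #S := by
  set ψ : G → G := fun g => g * (hR.toRightFun g : G)⁻¹
  refine ⟨((R * S).image ψ).erase 1, ?_, ?_⟩
  · rw [coe_erase, closure_sdiff_one, coe_image, Finset.coe_mul]
    exact closure_mul_image_eq hR hR1 hS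
  · have htriv : ∀ p ∈ mulMemPairs R S, (ψ ∘ fun p : G × G => p.1 * p.2) p = 1 :=
      fun p hp => by
        simp [ψ, hR.toRightFun_eq_self (mem_coe.mpr (mem_mulMemPairs.mp hp).2.2)]
    have hcard := card_erase_image_le _ (R ×ˢ S) _ htriv
    have hsub := card_le_card (mulMemPairs_subset_product R S)
    rw [← image_image, ← mul_def, card_sdiff_of_subset (mulMemPairs_subset_product R S),
      card_product] at hcard
    rw [card_product] at hsub
    omega

/-- `R` picks one point from each of some right cosets of `H`, and the edges `r ⟶ r * s`
(`s ∈ S`) of the Schreier graph that stay inside `R` contain a spanning tree of them. -/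
structure Subgroup.IsPartialSchreierTransversal (H : Subgroup G) (S R : Finset G) : Prop where
  one_mem : (1 : G) ∈ R
  eq_of_mul_inv_mem : ∀ a ∈ R, ∀ b ∈ R, a * b⁻¹ ∈ H → a = b
  card_le_card_mulMemPairs : #R ≤ #(mulMemPairs R S) + 1

namespace Subgroup.IsPartialSchreierTransversal

variable {H : Subgroup G} {S R : Finset G}

theorem singleton_one : IsPartialSchreierTransversal H S {1} where
  one_mem := mem_singleton_self 1
  eq_of_mul_inv_mem a ha b hb _ := by rw [mem_singleton.mp ha, mem_singleton.mp hb]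
  card_le_card_mulMemPairs := by simp

protected theorem insert (hR : IsPartialSchreierTransversal H S R) {x : G}
    (hx : ∀ r ∈ R, x * r⁻¹ ∉ H) {p : G × G} (hp : p ∈ mulMemPairs (insert x R) S) (hpR : p ∉ mulMemPairs R S) :
    IsPartialSchreierTransversal H S (insert x R) where
  one_mem := mem_insert_of_mem hR.one_mem
  eq_of_mul_inv_mem a ha b hb hab := by
    rcases mem_insert.mp ha with rfl | haR <;> rcases mem_insert.mp hb with rfl | hbR
    · rfl
    · exact absurd hab (hx b hbR)
    · exact absurd (by simpa using H.inv_mem hab) (hx a haR)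
    · exact hR.eq_of_mul_inv_mem a haR b hbR hab
  card_le_card_mulMemPairs := by
    have hxR : x ∉ R := fun h => hx x h (by simp)
    have hlt : #(mulMemPairs R S) < #(mulMemPairs (insert x R) S) :=
      card_lt_card ((ssubset_iff_of_subset (mulMemPairs_mono (subset_insert x R))).mpr
        ⟨p, hp, hpR⟩)
    rw [card_insert_of_notMem hxR]
    have := hR.card_le_card_mulMemPairs
    omega

theorem exists_insert (hR : IsPartialSchreierTransversal H S R) (hS : closure (S : Set G) = ⊤)
    (hcov : ∃ g : G, ∀ r ∈ R, g * r⁻¹ ∉ H) :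
    ∃ x ∉ R, IsPartialSchreierTransversal H S (insert x R) := by
  have hedge : ∃ r ∈ R, ∃ s ∈ S,
      (∀ r' ∈ R, r * s * r'⁻¹ ∉ H) ∨ ∀ r' ∈ R, r * s⁻¹ * r'⁻¹ ∉ H := by
    by_contra! hclosed
    obtain ⟨g, hg⟩ := hcov
    obtain ⟨r, hr, hgr⟩ := mem_of_closure_eq_top (X := {g | ∃ r ∈ R, g * r⁻¹ ∈ H}) hS
      ⟨1, hR.one_mem, by simp⟩
      (fun x ⟨r, hr, hxr⟩ s hs => by
        obtain ⟨r', hr', hrr'⟩ := (hclosed r hr s hs).1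
        exact ⟨r', hr', by simpa [mul_assoc] using H.mul_mem hxr hrr'⟩)
      (fun x ⟨r, hr, hxr⟩ s hs => by
        obtain ⟨r', hr', hrr'⟩ := (hclosed r hr s hs).2
        exact ⟨r', hr', by simpa [mul_assoc] using H.mul_mem hxr hrr'⟩)
      g
    exact hg r hr hgr
  obtain ⟨r, hr, s, hs, hout | hout⟩ := hedge
  · have hxR : r * s ∉ R := fun h => hout _ h (by simp)
    exact ⟨r * s, hxR, hR.insert hout (p := (r, s)) (by simp [hr, hs]) (by simp [hxR])⟩
  · have hxR : r * s⁻¹ ∉ R := fun h => hout _ h (by simp)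
    exact ⟨r * s⁻¹, hxR, hR.insert hout (p := (r * s⁻¹, s)) (by simp [hr, hs]) (by simp [hxR])⟩

theorem exists_isComplement [H.FiniteIndex] {R : Finset G} (hR : IsPartialSchreierTransversal H S R)
    (hS : closure (S : Set G) = ⊤) :
    ∃ R', IsPartialSchreierTransversal H S R' ∧ IsComplement (H : Set G) R' := by
  by_cases hcov : ∀ g : G, ∃ r ∈ R, g * r⁻¹ ∈ H
  · exact ⟨R, hR, isComplement_of_mul_inv_mem hR.eq_of_mul_inv_mem hcov⟩
  · push Not at hcov
    obtain ⟨x, hxR, hR'⟩ := hR.exists_insert hS hcov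
    have hle := card_le_index_of_mul_inv_mem hR'.eq_of_mul_inv_mem
    exact hR'.exists_isComplement hS
termination_by H.index - #R
decreasing_by rw [card_insert_of_notMem hxR] at hle ⊢; omega

end Subgroup.IsPartialSchreierTransversal

end

/-- if `G` is a finitely generated group and `H` is a subgroup of finite
index, then `rk(H) ≤ [G:H]·(rk(G) − 1) + 1`; in particular `H` is finitely generated
(witnessed by a generating set of cardinality at most `[G:H]·(rk(G) − 1) + 1`). -/
theorem rank_le_of_finiteIndex {G : Type*} [Group G] [Group.FG G]
    (H : Subgroup G) [H.FiniteIndex] :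
    ∃ S : Finset G, Subgroup.closure (S : Set G) = H ∧
      S.card ≤ H.index * (Subgroup.rk (⊤ : Subgroup G) - 1) + 1 := by
  classical
  obtain ⟨S, hScard, hS⟩ := Group.rank_spec G
  obtain ⟨R, hRtree, hR⟩ :=
    (IsPartialSchreierTransversal.singleton_one (H := H)).exists_isComplement hS
  obtain ⟨T, hT, hTcard⟩ := exists_closure_eq_card_add_card_mulMemPairs_le hR hRtree.one_mem hS
  have hRcard : #R = H.index := by rw [← hR.card_right, Nat.card_coe_set_eq, Set.ncard_coe_finset]
  refine ⟨T, hT, ?_⟩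
  have htree := hRtree.card_le_card_mulMemPairs
  rw [rk_top, ← hScard, ← hRcard, Nat.mul_sub_one]
  omega
end

section
/- Let G be a group with a subgroup F of finite index m. Let n_1, n_2 ≥ 1 and let C be a natural number such that for all subgroups K_1, K_2 of F that are generated by at most m(n_1 − 1) + 1 and at most m(n_2 − 1) + 1 elements respectively, the intersection K_1 ∩ K_2 is generated by at most C elements. Then for all subgroups H_1, H_2 of G generated by at most n_1 and n_2 elements respectively, the intersection H_1 ∩ H_2 is generated by at most C + m − 1 elements. -/
/-- `H` is generated by at most `n` elements. -/
def Subgroup.GenLE {G : Type*} [Group G] (H : Subgroup G) (n : ℕ) : Prop :=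
  ∃ S : Finset G, Subgroup.closure (S : Set G) = H ∧ S.card ≤ n

/-!
Let `G` act on the cosets `G ⧸ F` and let `a` be the trivial coset, so `F` is its stabilizer.
If `H = ⟨S⟩`, Schreier's lemma with a transversal read off a breadth-first spanning tree of the
Schreier graph of the `H`-orbit `O` of `a` generates `F ∩ H` by the `|O| |S|` Schreier generators,
of which the `|O| - 1` tree edges are trivial: this gives at most `m (|S| - 1) + 1` generators.
Then `(F ∩ H₁) ∩ (F ∩ H₂) = F ∩ (H₁ ∩ H₂)` has at most `C` generators, and adding one element of
`H₁ ∩ H₂` for each non-trivial point of its orbit of `a` generates `H₁ ∩ H₂`.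
-/

open MulAction Subgroup Pointwise

namespace Schreier

section

variable {G α : Type*} [Group G] [MulAction G α] (S : Set G) (a : α)

def reach : Set α := {q | ∃ n, ∃ g ∈ (S ∪ S⁻¹) ^ n, g • a = q}

/-- Distance from `a` in the Schreier graph; the junk value `0` off `reach S a` is never used. -/
noncomputable def wordDist (q : α) : ℕ := sInf {n | ∃ g ∈ (S ∪ S⁻¹) ^ n, g • a = q}

variable {S a}

theorem smul_mem_reach {x : G} (hx : x ∈ S ∪ S⁻¹) {q : α} (hq : q ∈ reach S a) :
    x • q ∈ reach S a := by
  obtain ⟨n, g, hg, rfl⟩ := hq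
  exact ⟨n + 1, x * g, by rw [pow_succ']; exact Set.mul_mem_mul hx hg, mul_smul x g a⟩

theorem smul_mem_reach_of_mem_closure {g : G} (hg : g ∈ closure S) : g • a ∈ reach S a := by
  induction hg using closure_induction_left with
  | one => exact ⟨0, 1, by simp, rfl⟩
  | mul_left x hx y _ ih => rw [mul_smul]; exact smul_mem_reach (Or.inl hx) ih
  | inv_mul_cancel x hx y _ ih =>
    rw [mul_smul]; exact smul_mem_reach (Or.inr (Set.inv_mem_inv.mpr hx)) ih

theorem wordDist_self : wordDist S a a = 0 :=
  Nat.sInf_eq_zero.mpr (Or.inl ⟨1, by simp, one_smul G a⟩)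

theorem exists_pow_wordDist_smul_eq {q : α} (hq : q ∈ reach S a) :
    ∃ g ∈ (S ∪ S⁻¹) ^ wordDist S a q, g • a = q :=
  Nat.sInf_mem hq

theorem eq_of_wordDist_eq_zero {q : α} (hq : q ∈ reach S a) (h : wordDist S a q = 0) :
    q = a := by
  obtain ⟨g, hg, rfl⟩ := h ▸ exists_pow_wordDist_smul_eq hq
  rw [pow_zero, Set.mem_one] at hg
  rw [hg, one_smul]

theorem exists_parent {q : α} (hq : q ∈ reach S a) (hqa : q ≠ a) :
    ∃ x ∈ S ∪ S⁻¹, ∃ q' ∈ reach S a, wordDist S a q' < wordDist S a q ∧ x • q' = q := by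
  obtain ⟨k, hk⟩ := Nat.exists_eq_succ_of_ne_zero (mt (eq_of_wordDist_eq_zero hq) hqa)
  obtain ⟨g, hg, rfl⟩ := hk ▸ exists_pow_wordDist_smul_eq hq
  rw [pow_succ'] at hg
  obtain ⟨x, hx, y, hy, rfl⟩ := hg
  exact ⟨x, hx, y • a, ⟨k, y, hy, rfl⟩, hk ▸ Nat.lt_succ_of_le (Nat.sInf_le ⟨y, hy, rfl⟩),
    (mul_smul x y a).symm⟩

open Classical in
variable (S a) in
/-- Representatives along a breadth-first spanning tree of the Schreier graph rooted at `a`: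
each `rep q` extends the representative of a strictly closer point by one letter. -/
noncomputable def rep (q : α) : G :=
  if h : ∃ x ∈ S ∪ S⁻¹, ∃ q' ∈ reach S a, wordDist S a q' < wordDist S a q ∧ x • q' = q then
    h.choose * rep h.choose_spec.2.choose
  else 1
termination_by wordDist S a q
decreasing_by exact h.choose_spec.2.choose_spec.2.1

theorem rep_self : rep S a a = 1 := by
  rw [rep, dif_neg]
  rintro ⟨_, _, _, _, hlt, _⟩
  rw [wordDist_self] at hlt
  exact Nat.not_lt_zero _ hlt

theorem exists_rep_eq_mul {q : α} (hq : q ∈ reach S a) (hqa : q ≠ a) :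
    ∃ x ∈ S ∪ S⁻¹, ∃ q' ∈ reach S a, wordDist S a q' < wordDist S a q ∧ x • q' = q ∧
      rep S a q = x * rep S a q' := by
  have h := exists_parent hq hqa
  obtain ⟨hq', hlt, hxq⟩ := h.choose_spec.2.choose_spec
  exact ⟨_, h.choose_spec.1, _, hq', hlt, hxq, by rw [rep, dif_pos h]⟩

theorem rep_mem_closure_and_smul {q : α} (hq : q ∈ reach S a) :
    rep S a q ∈ closure S ∧ rep S a q • a = q := by
  induction hd : wordDist S a q using Nat.strong_induction_on generalizing q with
  | _ d ih =>
    by_cases hqa : q = a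
    · subst hqa; simp [rep_self, one_mem]
    obtain ⟨x, hx, q', hq', hlt, rfl, hrep⟩ := exists_rep_eq_mul hq hqa
    obtain ⟨hmem, hsmul⟩ := ih _ (hd ▸ hlt) hq' rfl
    have hxS : x ∈ closure S := hx.elim (Subgroup.subset_closure ·) (fun h => by
      simpa using inv_mem (Subgroup.subset_closure h))
    exact ⟨hrep ▸ mul_mem hxS hmem, by rw [hrep, mul_smul, hsmul]⟩

variable (S a) in
noncomputable def schreierGen (q : α) (s : G) : G := (rep S a (s • q))⁻¹ * s * rep S a q

theorem rep_mem_closure {q : α} (hq : q ∈ reach S a) : rep S a q ∈ closure S :=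
  (rep_mem_closure_and_smul hq).1

theorem rep_smul {q : α} (hq : q ∈ reach S a) : rep S a q • a = q :=
  (rep_mem_closure_and_smul hq).2

theorem schreierGen_mem {q : α} (hq : q ∈ reach S a) {s : G} (hs : s ∈ S) :
    schreierGen S a q s ∈ stabilizer G a ⊓ closure S := by
  have hsq : s • q ∈ reach S a := smul_mem_reach (Or.inl hs) hq
  refine Subgroup.mem_inf.mpr ⟨?_, mul_mem (mul_mem (inv_mem (rep_mem_closure hsq))
    (Subgroup.subset_closure hs)) (rep_mem_closure hq)⟩
  rw [mem_stabilizer_iff, schreierGen, mul_smul, mul_smul, rep_smul hq, inv_smul_eq_iff,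
    rep_smul hsq]

theorem inv_rep_mul_mem_closure_schreierGen {g : G} (hg : g ∈ closure S) :
    (rep S a (g • a))⁻¹ * g ∈ closure (Set.image2 (schreierGen S a) (reach S a) S) := by
  induction hg using closure_induction_left with
  | one => simp [rep_self, one_mem]
  | mul_left x hx y hy ih =>
    have hq := smul_mem_reach_of_mem_closure (a := a) hy
    have hgen := Subgroup.subset_closure (Set.mem_image2_of_mem (f := schreierGen S a) hq hx)
    convert mul_mem hgen ih using 1
    simp only [schreierGen, mul_smul]
    group
  | inv_mul_cancel x hx y hy ih =>
    have hq := smul_mem_reach (Or.inr (Set.inv_mem_inv.mpr hx))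
      (smul_mem_reach_of_mem_closure (a := a) hy)
    have hgen := Subgroup.subset_closure (Set.mem_image2_of_mem (f := schreierGen S a) hq hx)
    convert mul_mem (inv_mem hgen) ih using 1
    simp only [schreierGen, mul_smul, smul_inv_smul]
    group

theorem closure_image2_schreierGen :
    closure (Set.image2 (schreierGen S a) (reach S a) S) = stabilizer G a ⊓ closure S := by
  refine le_antisymm ((closure_le _).mpr ?_) fun g hg => ?_
  · rintro - ⟨q, hq, s, hs, rfl⟩
    exact schreierGen_mem hq hs
  · obtain ⟨hga, hg⟩ := Subgroup.mem_inf.mp hg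
    simpa [mem_stabilizer_iff.mp hga, rep_self] using
      inv_rep_mul_mem_closure_schreierGen (a := a) hg

variable (S a) in
noncomputable def farEnd (q : α) (s : G) : α :=
  if wordDist S a (s • q) ≤ wordDist S a q then q else s • q

/-- The tree edge joining `q` to its parent carries a trivial Schreier generator. -/
theorem exists_schreierGen_eq_one {q : α} (hq : q ∈ reach S a) (hqa : q ≠ a) :
    ∃ b ∈ reach S a, ∃ s ∈ S, schreierGen S a b s = 1 ∧ farEnd S a b s = q := by
  obtain ⟨x, hx | hx, q', hq', hlt, rfl, hrep⟩ := exists_rep_eq_mul hq hqa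
  · refine ⟨q', hq', x, hx, ?_, if_neg hlt.not_ge⟩
    rw [schreierGen, hrep]
    group
  · refine ⟨x • q', hq, x⁻¹, hx, ?_, ?_⟩
    · rw [schreierGen, inv_smul_smul, hrep]
      group
    · rw [farEnd, inv_smul_smul, if_pos hlt.le]

end

theorem card_erase_one_image₂_schreierGen_le {G α : Type*} [Group G] [MulAction G α]
    [DecidableEq G] (S : Finset G) {a : α} {O : Finset α}
    (hO : (O : Set α) = reach (S : Set G) a) :
    ((Finset.image₂ (schreierGen (S : Set G) a) O S).erase 1).card ≤
      O.card * (S.card - 1) + 1 := by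
  classical
  set f := schreierGen (S : Set G) a
  set P := O ×ˢ S
  have hgens : (Finset.image₂ f O S).erase 1 =
      (P.filter fun p => ¬f p.1 p.2 = 1).image fun p => f p.1 p.2 := by
    rw [← Finset.image_uncurry_product, ← Finset.filter_ne', Finset.filter_image]
    rfl
  have htriv : O.card - 1 ≤ (P.filter fun p => f p.1 p.2 = 1).card := by
    have hsub : O.erase a ⊆
        (P.filter fun p => f p.1 p.2 = 1).image fun p => farEnd S a p.1 p.2 := by
      intro q hq
      obtain ⟨hqa, hqO⟩ := Finset.mem_erase.mp hq
      obtain ⟨b, hb, s, hs, h1, rfl⟩ :=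
        exists_schreierGen_eq_one (hO ▸ Finset.mem_coe.mpr hqO) hqa
      rw [← hO, Finset.mem_coe] at hb
      exact Finset.mem_image.mpr ⟨(b, s), Finset.mem_filter.mpr
        ⟨Finset.mem_product.mpr ⟨hb, hs⟩, h1⟩, rfl⟩
    calc O.card - 1 ≤ (O.erase a).card := Finset.pred_card_le_card_erase
      _ ≤ _ := (Finset.card_le_card hsub).trans Finset.card_image_le
  have hsplit := Finset.card_filter_add_card_filter_not (s := P) fun p => f p.1 p.2 = 1
  rw [Finset.card_product] at hsplit
  rw [hgens]
  refine Finset.card_image_le.trans ?_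
  rcases Nat.eq_zero_or_pos S.card with h0 | hpos
  · rw [h0, mul_zero] at hsplit
    omega
  · have := Nat.mul_sub_one O.card S.card
    have := Nat.le_mul_of_pos_right O.card hpos
    omega

end Schreier

namespace Subgroup.GenLE

variable {G α : Type*} [Group G] [MulAction G α] [Finite α] {H : Subgroup G} {n : ℕ}

theorem stabilizer_inf (hH : H.GenLE n) (a : α) :
    (stabilizer G a ⊓ H).GenLE (Nat.card α * (n - 1) + 1) := by
  classical
  obtain ⟨S, rfl, hS⟩ := hH
  have := Fintype.ofFinite α
  set O := (Schreier.reach (S : Set G) a).toFinset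
  refine ⟨(Finset.image₂ (Schreier.schreierGen S a) O S).erase 1, ?_, ?_⟩
  · rw [Finset.coe_erase, closure_sdiff_one, Finset.coe_image₂, Set.coe_toFinset,
      Schreier.closure_image2_schreierGen]
  · calc _ ≤ O.card * (S.card - 1) + 1 :=
          Schreier.card_erase_one_image₂_schreierGen_le S (Set.coe_toFinset _)
      _ ≤ Nat.card α * (n - 1) + 1 := by
        rw [Nat.card_eq_fintype_card]
        gcongr
        exact O.card_le_univ

theorem of_stabilizer_inf (a : α) (h : (stabilizer G a ⊓ H).GenLE n) :
    H.GenLE (n + (Nat.card α - 1)) := by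
  classical
  obtain ⟨T, hT, hTn⟩ := h
  have := Fintype.ofFinite α
  choose! σ hσH hσa using fun q (hq : ∃ h ∈ H, h • a = q) => hq
  set O := (Finset.univ.erase a).filter fun q => ∃ h ∈ H, h • a = q
  refine ⟨T ∪ O.image σ, le_antisymm ((closure_le _).mpr ?_) fun h hh => ?_, ?_⟩
  · intro x hx
    rcases Finset.mem_union.mp hx with hx | hx
    · exact (Subgroup.mem_inf.mp (hT ▸ Subgroup.subset_closure hx)).2
    · obtain ⟨q, hq, rfl⟩ := Finset.mem_image.mp hx
      exact hσH q (Finset.mem_filter.mp hq).2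
  · have hTle : (stabilizer G a ⊓ H) ≤ closure ((T ∪ O.image σ : Finset G) : Set G) :=
      hT ▸ closure_mono (by simp)
    by_cases hha : h • a = a
    · exact hTle (Subgroup.mem_inf.mpr ⟨hha, hh⟩)
    have hσ : σ (h • a) ∈ closure ((T ∪ O.image σ : Finset G) : Set G) :=
      Subgroup.subset_closure (Finset.mem_union_right _ (Finset.mem_image_of_mem σ
        (Finset.mem_filter.mpr ⟨Finset.mem_erase.mpr ⟨hha, Finset.mem_univ _⟩, h, hh, rfl⟩)))
    have hquot : (σ (h • a))⁻¹ * h ∈ stabilizer G a ⊓ H :=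
      Subgroup.mem_inf.mpr ⟨by rw [mem_stabilizer_iff, mul_smul, inv_smul_eq_iff,
        hσa _ ⟨h, hh, rfl⟩], mul_mem (inv_mem (hσH _ ⟨h, hh, rfl⟩)) hh⟩
    simpa using mul_mem hσ (hTle hquot)
  · calc (T ∪ O.image σ).card ≤ T.card + O.card :=
          (Finset.card_union_le _ _).trans (Nat.add_le_add_left Finset.card_image_le _)
      _ ≤ n + (Nat.card α - 1) := by
        gcongr
        rw [Nat.card_eq_fintype_card, ← Finset.card_univ, ← Finset.card_erase_of_mem
          (Finset.mem_univ a)]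
        exact Finset.card_filter_le _ _

end Subgroup.GenLE

theorem inter_genLE_of_finite_extension_general {G : Type*} [Group G] (F : Subgroup G)
    (m : ℕ) (hm : 0 < m) (hindex : F.index = m)
    (n₁ n₂ : ℕ) (C : ℕ)
    (hC : ∀ K₁ K₂ : Subgroup G, K₁ ≤ F → K₂ ≤ F →
      K₁.GenLE (m * (n₁ - 1) + 1) → K₂.GenLE (m * (n₂ - 1) + 1) → (K₁ ⊓ K₂).GenLE C) :
    ∀ H₁ H₂ : Subgroup G, H₁.GenLE n₁ → H₂.GenLE n₂ → (H₁ ⊓ H₂).GenLE (C + m - 1) := by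
  intro H₁ H₂ h₁ h₂
  have : F.FiniteIndex := ⟨by omega⟩
  have hcard : Nat.card (G ⧸ F) = m := hindex
  have hstab : stabilizer G ((1 : G) : G ⧸ F) = F := stabilizer_quotient F
  have hF : ∀ {H : Subgroup G} {n : ℕ}, H.GenLE n → (F ⊓ H).GenLE (m * (n - 1) + 1) :=
    fun h => hstab ▸ hcard ▸ h.stabilizer_inf _
  have hW := hC _ _ inf_le_left inf_le_left (hF h₁) (hF h₂)
  rw [← inf_inf_distrib_left, inf_comm, ← hstab, inf_comm] at hW
  simpa [hcard, Nat.add_sub_assoc hm] using hW.of_stabilizer_inf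

/-- quantitative form of "a finite extension of a strongly Howson group is
strongly Howson". If `F ≤ G` has finite index `m`, `n₁, n₂ ≥ 1` and `C` bounds the number
of generators of `K₁ ⊓ K₂` for all subgroups `K₁, K₂` of `F` generated by at most
`m(n₁−1)+1` and `m(n₂−1)+1` elements respectively, then for all subgroups `H₁, H₂` of `G`
generated by at most `n₁` and `n₂` elements respectively, `H₁ ⊓ H₂` is generated by at
most `C + m − 1` elements. -/
theorem inter_genLE_of_finite_extension {G : Type*} [Group G] (F : Subgroup G)
    (m : ℕ) (hm : 0 < m) (hindex : F.index = m)
    (n₁ n₂ : ℕ) (hn₁ : 1 ≤ n₁) (hn₂ : 1 ≤ n₂) (C : ℕ)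
    (hC : ∀ K₁ K₂ : Subgroup G, K₁ ≤ F → K₂ ≤ F →
      K₁.GenLE (m * (n₁ - 1) + 1) → K₂.GenLE (m * (n₂ - 1) + 1) → (K₁ ⊓ K₂).GenLE C) :
    ∀ H₁ H₂ : Subgroup G, H₁.GenLE n₁ → H₂.GenLE n₂ → (H₁ ⊓ H₂).GenLE (C + m - 1) :=
  inter_genLE_of_finite_extension_general F m hm hindex n₁ n₂ C hC
end

section
/- Let G be a group with a subgroup P of finite index m, where P admits a subnormal series P = P_0 ⊳ P_1 ⊳ ... ⊳ P_n = {1} with all quotients P_{i−1}/P_i cyclic. Then for all subgroups H_1, H_2 of G, the intersection H_1 ∩ H_2 is generated by at most n + m − 1 elements. In particular, every virtually polycyclic group is strongly Howson with bounded intersection-rank function. -/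
/-! A subgroup `K` of a group with a cyclic series of length `n` needs at most `n`
generators: going down the series, `K ∩ c i` is generated by generators of `K ∩ c (i + 1)`
together with one lift of a generator of its cyclic image in `c i / c (i + 1)`.
For `K ≤ G`, the subgroup `K ∩ P` of the polycyclic group `P` therefore needs at most `n`
generators, and adding the at most `m - 1` nontrivial representatives of the cosets of
`K ∩ P` in `K` generates `K`. -/

/-- `c` is a subnormal series `G = c 0 ⊳ c 1 ⊳ … ⊳ c n = {1}` (each term normal in the
previous one) with all quotients cyclic. -/
def IsCyclicSeries {G : Type*} [Group G] (n : ℕ) (c : Fin (n + 1) → Subgroup G) : Prop :=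
  c 0 = ⊤ ∧ c (Fin.last n) = ⊥ ∧
    ∀ i : Fin n, c i.succ ≤ c i.castSucc ∧
      ∃ _h : ((c i.succ).subgroupOf (c i.castSucc)).Normal,
        IsCyclic (↥(c i.castSucc) ⧸ (c i.succ).subgroupOf (c i.castSucc))

namespace Subgroup

variable {G Q : Type*} [Group G] [Group Q]

def RankLE (K : Subgroup G) (d : ℕ) : Prop :=
  ∃ S : Finset G, closure (S : Set G) = K ∧ S.card ≤ d

theorem RankLE.mono {K : Subgroup G} {d d' : ℕ} (h : K.RankLE d) (hd : d ≤ d') :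
    K.RankLE d' :=
  let ⟨S, hS, hcard⟩ := h
  ⟨S, hS, hcard.trans hd⟩

theorem rankLE_bot : (⊥ : Subgroup G).RankLE 0 :=
  ⟨∅, by simp, le_rfl⟩

theorem RankLE.map {K : Subgroup G} {d : ℕ} (h : K.RankLE d) (f : G →* Q) :
    (K.map f).RankLE d := by
  classical
  obtain ⟨S, hS, hcard⟩ := h
  exact ⟨S.image f, by rw [Finset.coe_image, ← MonoidHom.map_closure, hS],
    Finset.card_image_le.trans hcard⟩

theorem rankLE_subgroupOf_iff {K A : Subgroup G} {d : ℕ} :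
    (K.subgroupOf A).RankLE d ↔ (K ⊓ A).RankLE d := by
  classical
  refine ⟨fun h ↦ subgroupOf_map_subtype K A ▸ h.map A.subtype, ?_⟩
  rintro ⟨S, hS, hcard⟩
  have hSA : ∀ x ∈ S, x ∈ A := fun x hx ↦ (hS ▸ subset_closure hx : x ∈ K ⊓ A).2
  refine ⟨S.subtype (· ∈ A), map_injective A.subtype_injective ?_, ?_⟩
  · rw [MonoidHom.map_closure, subgroupOf_map_subtype, ← hS]
    congr
    ext x
    simpa using fun hx ↦ hSA x hx
  · exact (Finset.card_subtype _ _).trans_le (Finset.card_filter_le _ _ |>.trans hcard)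

theorem RankLE.of_inf_ker {K : Subgroup G} {d : ℕ} (φ : G →* Q) [IsCyclic (K.map φ)]
    (h : (K ⊓ φ.ker).RankLE d) : K.RankLE (d + 1) := by
  classical
  obtain ⟨T, hT, hcard⟩ := h
  obtain ⟨g, hg⟩ := isCyclic_iff_exists_zpowers_eq_top.mp ‹IsCyclic (K.map φ)›
  obtain ⟨u, hu, hug⟩ := g.2
  have hφK : ∀ k ∈ K, ∃ j : ℤ, φ u ^ j = φ k := by
    intro k hk
    obtain ⟨j, hj⟩ := mem_zpowers_iff.mp (hg ▸ mem_top (⟨φ k, k, hk, rfl⟩ : K.map φ))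
    exact ⟨j, by simpa [hug] using congrArg Subtype.val hj⟩
  refine ⟨insert u T, le_antisymm ?_ ?_, (Finset.card_insert_le _ _).trans (by omega)⟩
  · rw [closure_le, Finset.coe_insert]
    exact Set.insert_subset hu fun t ht ↦ (hT ▸ subset_closure ht : t ∈ K ⊓ φ.ker).1
  · intro k hk
    obtain ⟨j, hj⟩ := hφK k hk
    have hker : (u ^ j)⁻¹ * k ∈ K ⊓ φ.ker :=
      mem_inf.mpr ⟨mul_mem (inv_mem (zpow_mem hu j)) hk, by simp [hj]⟩
    rw [← hT] at hker
    rw [Finset.coe_insert, Set.insert_eq, closure_union, ← zpowers_eq_closure]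
    simpa using mul_mem_sup (zpow_mem_zpowers u j) hker

theorem RankLE.inf_of_isCyclic_quotient {K A B : Subgroup G} {d : ℕ} (hBA : B ≤ A)
    [(B.subgroupOf A).Normal] [IsCyclic (A ⧸ B.subgroupOf A)] (h : (K ⊓ B).RankLE d) :
    (K ⊓ A).RankLE (d + 1) := by
  rw [← rankLE_subgroupOf_iff]
  apply RankLE.of_inf_ker (QuotientGroup.mk' (B.subgroupOf A))
  have hinf : K.subgroupOf A ⊓ B.subgroupOf A = (K ⊓ B).subgroupOf A := (comap_inf _ _ _).symm
  rw [QuotientGroup.ker_mk', hinf, rankLE_subgroupOf_iff, inf_assoc, inf_of_le_left hBA]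
  exact h

theorem RankLE.top_of_finiteIndex {H : Subgroup G} [H.FiniteIndex] {d : ℕ} (hH : H.RankLE d) :
    (⊤ : Subgroup G).RankLE (d + H.index - 1) := by
  classical
  obtain ⟨S, hS, hS1⟩ := H.exists_isComplement_left 1
  obtain ⟨T, hT, hcard⟩ := hH
  refine ⟨T ∪ hS.finite_left.toFinset.erase 1, (eq_top_iff' _).mpr fun g ↦ ?_, ?_⟩
  · obtain ⟨s, hs, h, hh, rfl⟩ := Set.mem_mul.mp (hS.mul_eq ▸ Set.mem_univ g)
    rw [Finset.coe_union, Finset.coe_erase, Set.Finite.coe_toFinset, closure_union,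
      closure_sdiff_one, hT, sup_comm]
    exact mul_mem_sup (subset_closure hs) hh
  · have hS_card : (hS.finite_left.toFinset.erase 1).card = H.index - 1 := by
      rw [Finset.card_erase_of_mem (by simpa), ← Set.ncard_eq_toFinset_card _ hS.finite_left,
        hS.ncard_left]
    have := H.index_ne_zero_of_finite
    calc _ ≤ T.card + (hS.finite_left.toFinset.erase 1).card := Finset.card_union_le _ _
      _ ≤ d + H.index - 1 := by omega

theorem RankLE.of_inf_finiteIndex {K P : Subgroup G} [P.FiniteIndex] {d : ℕ}
    (h : (K ⊓ P).RankLE d) : K.RankLE (d + P.index - 1) := by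
  have hKP : (P.subgroupOf K).RankLE d := rankLE_subgroupOf_iff.mpr (inf_comm K P ▸ h)
  have hK := hKP.top_of_finiteIndex
  rw [← subgroupOf_self, rankLE_subgroupOf_iff, inf_idem] at hK
  have hle : P.relIndex K ≤ P.index := relIndex_top_right P ▸
    relIndex_le_of_le_right le_top (relIndex_top_right P ▸ index_ne_zero_of_finite)
  have := (isFiniteRelIndex_of_finiteIndex (H := P) (K := K)).relIndex_ne_zero
  exact hK.mono (by rw [← relIndex]; omega)

end Subgroup

theorem IsCyclicSeries.rankLE {G : Type*} [Group G] {n : ℕ} {c : Fin (n + 1) → Subgroup G}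
    (hc : IsCyclicSeries n c) (K : Subgroup G) : K.RankLE n := by
  obtain ⟨h0, hlast, hstep⟩ := hc
  suffices ∀ i : Fin (n + 1), (K ⊓ c i).RankLE (n - i) by
    simpa [h0] using this 0
  intro i
  induction i using Fin.reverseInduction with
  | last => simpa [hlast] using Subgroup.rankLE_bot
  | cast i ih =>
    obtain ⟨hle, hnorm, hcyc⟩ := hstep i
    exact (ih.inf_of_isCyclic_quotient hle).mono
      (by simp only [Fin.val_succ, Fin.val_castSucc]; omega)

/-- if `G` has a subgroup `P` of finite index `m` and `P` admits a subnormal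
series of length `n` with cyclic quotients (i.e. `P` is polycyclic), then for all
subgroups `H₁, H₂` of `G` the intersection `H₁ ⊓ H₂` is generated by at most `n + m − 1`
elements. In particular every virtually polycyclic group is strongly Howson with bounded
intersection-rank function. -/
theorem inter_genLE_of_virtually_polycyclic {G : Type*} [Group G] (P : Subgroup G)
    (m : ℕ) (hm : 0 < m) (hindex : P.index = m)
    (n : ℕ) (c : Fin (n + 1) → Subgroup ↥P) (hc : IsCyclicSeries n c)
    (H₁ H₂ : Subgroup G) :
    ∃ S : Finset G, Subgroup.closure (S : Set G) = H₁ ⊓ H₂ ∧ S.card ≤ n + m - 1 := by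
  have : P.FiniteIndex := ⟨hindex ▸ hm.ne'⟩
  have hKP : (H₁ ⊓ H₂ ⊓ P).RankLE n := Subgroup.rankLE_subgroupOf_iff.mp (hc.rankLE _)
  exact hindex ▸ hKP.of_inf_finiteIndex
end

section
/- Let N be a nilpotent group of nilpotency class at most n that is generated by k elements, where k ≥ 2. Then every subgroup H of N is generated by at most (k^{n+1} − k)/(k − 1) elements (equivalently, at most k + k² + ... + k^n elements). -/
/-!
Induct on the class `c`. The last nontrivial term `Z = γ_{c-1}` of the lower central series is
central and, since commutators are bimultiplicative modulo the next term of the series, `γᵢ` is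
generated modulo `γᵢ₊₁` by the `kⁱ⁺¹` left-normed commutators of the generators; so `Z` is generated
by `kᶜ` commuting elements. In an abelian group, a subgroup of a subgroup with `m` generators has at
most `m` generators (submodules of `ℤᵐ` are free of rank `≤ m`), so `H ⊓ Z` needs at most `kᶜ`
generators. By induction the image of `H` in `N ⧸ Z` needs at most `k + ⋯ + kᶜ⁻¹`, and lifts of
those together with generators of `H ⊓ Z` generate `H`.
-/

open Subgroup
open scoped commutatorElement

theorem Submodule.exists_finset_span_eq_card_le_of_le_span {R M : Type*} [CommRing R]
    [IsDomain R] [IsPrincipalIdealRing R] [AddCommGroup M] [Module R M] (s : Finset M)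
    {p : Submodule R M} (hp : p ≤ span R s) :
    ∃ t : Finset M, span R (t : Set M) = p ∧ t.card ≤ s.card := by
  classical
  let f := Fintype.linearCombination R ((↑) : s → M)
  have hf : LinearMap.range f = span R s := by
    rw [Fintype.range_linearCombination, Subtype.range_coe]
  obtain ⟨m, b⟩ := Submodule.basisOfPid (Pi.basisFun R s) (p.comap f)
  refine ⟨Finset.univ.image fun i => f (b i), ?_, ?_⟩
  · have hrange : Set.range (fun i => f (b i)) = (f ∘ₗ (p.comap f).subtype) '' Set.range b := by
      rw [← Set.range_comp]; rfl
    rw [Finset.coe_image, Finset.coe_univ, Set.image_univ, hrange, Submodule.span_image, b.span_eq,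
      Submodule.map_top, LinearMap.range_comp, Submodule.range_subtype, Submodule.map_comap_eq, hf,
      inf_eq_right.2 hp]
  · calc _ ≤ m := Finset.card_image_le.trans (by simp)
      _ ≤ s.card := by simpa using Module.Basis.card_le_card_of_submodule _ (Pi.basisFun R s) b

theorem Subgroup.exists_finset_closure_eq_card_le_of_le_closure {A : Type*} [CommGroup A]
    (X : Finset A) {H : Subgroup A} (hH : H ≤ closure X) :
    ∃ S : Finset A, closure (S : Set A) = H ∧ S.card ≤ X.card := by
  have hclosure (S : Finset A) : (closure (S : Set A)).toAddSubgroup.toIntSubmodule =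
      Submodule.span ℤ (S.map Additive.ofMul.toEmbedding : Set (Additive A)) := by
    apply AddSubgroup.toIntSubmodule.symm.injective
    simp only [toAddSubgroup_closure, OrderIso.symm_apply_apply, AddSubgroup.toIntSubmodule_symm,
      Submodule.span_int_eq_addSubgroupClosure, Finset.coe_map]
    rw [Equiv.coe_toEmbedding, Equiv.image_eq_preimage_symm]; rfl
  obtain ⟨t, ht, hcard⟩ := Submodule.exists_finset_span_eq_card_le_of_le_span
    (X.map Additive.ofMul.toEmbedding) (p := H.toAddSubgroup.toIntSubmodule)
    (by rw [← hclosure]; exact hH)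
  refine ⟨t.map Additive.toMul.toEmbedding, ?_, by simpa using hcard⟩
  apply AddSubgroup.toIntSubmodule.injective.comp toAddSubgroup.injective
  rw [Function.comp_apply, hclosure]
  simpa [Finset.map_map] using ht

open scoped IsMulCommutative in
theorem Subgroup.exists_finset_closure_eq_card_le_of_le_closure_of_comm {G : Type*} [Group G]
    (X : Finset G) (hX : ∀ x ∈ X, ∀ y ∈ X, x * y = y * x) {H : Subgroup G}
    (hH : H ≤ closure X) :
    ∃ S : Finset G, closure (S : Set G) = H ∧ S.card ≤ X.card := by
  classical
  have := isMulCommutative_closure hX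
  set K := closure (X : Set G)
  have hXK : ((X.subtype (· ∈ K) : Finset K) : Set K) = (↑) ⁻¹' (X : Set G) := by
    ext; simp
  obtain ⟨S, hS, hcard⟩ := exists_finset_closure_eq_card_le_of_le_closure (X.subtype (· ∈ K))
    (H := H.subgroupOf K) (by rw [hXK, closure_closure_coe_preimage]; exact le_top)
  refine ⟨S.map (Function.Embedding.subtype _), ?_, ?_⟩
  · rw [Finset.coe_map, Function.Embedding.coe_subtype, ← coe_subtype, ← MonoidHom.map_closure, hS,
      subgroupOf_map_subtype, inf_eq_left.2 hH]
  · rw [Finset.card_map]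
    exact hcard.trans ((Finset.card_subtype _ _).trans_le (Finset.card_filter_le _ _))

theorem Subgroup.exists_finset_closure_eq_card_le_add {G Q : Type*} [Group G] [Group Q]
    [DecidableEq G] (f : G →* Q) {H : Subgroup G} {S₁ : Finset Q} {S₂ : Finset G}
    (hS₁ : closure (S₁ : Set Q) = H.map f) (hS₂ : closure (S₂ : Set G) = H ⊓ f.ker) :
    ∃ S : Finset G, closure (S : Set G) = H ∧ S.card ≤ S₁.card + S₂.card := by
  have hlift : ∀ q ∈ S₁, ∃ h ∈ H, f h = q := fun q hq =>
    mem_map.1 (hS₁ ▸ subset_closure hq)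
  choose! lift hlift_mem hlift_eq using hlift
  set L := S₁.image lift
  have hLH : closure (L : Set G) ≤ H :=
    (closure_le _).2 <| by simpa [L, Set.image_subset_iff, Set.subset_def] using hlift_mem
  have hmapL : (closure (L : Set G)).map f = H.map f := by
    rw [← hS₁, MonoidHom.map_closure, Finset.coe_image, Set.image_image, Set.image_congr hlift_eq,
      Set.image_id']
  refine ⟨L ∪ S₂, le_antisymm ?_ fun h hh => ?_, (Finset.card_union_le _ _).trans
    (Nat.add_le_add_right Finset.card_image_le _)⟩
  · rw [Finset.coe_union, closure_union, sup_le_iff, hS₂]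
    exact ⟨hLH, inf_le_left⟩
  · obtain ⟨x, hx, hfx⟩ : f h ∈ (closure (L : Set G)).map f := hmapL ▸ mem_map_of_mem f hh
    have hker : h * x⁻¹ ∈ closure (S₂ : Set G) := by
      rw [hS₂]
      exact mem_inf.2 ⟨mul_mem hh (inv_mem (hLH hx)), by simp [hfx]⟩
    rw [Finset.coe_union, closure_union]
    simpa using mul_mem (mem_sup_right hker) (mem_sup_left hx :
      x ∈ closure (L : Set G) ⊔ closure (S₂ : Set G))

section Commutator

variable {G : Type*} [Group G]

theorem commutatorElement_mem_of_mem_closure {x : G} {Y : Set G} {W : Subgroup G}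
    (hcent : ∀ q ∈ closure Y, ⁅x, q⁆ ∈ center G) (hY : ∀ y ∈ Y, ⁅x, y⁆ ∈ W) {q : G}
    (hq : q ∈ closure Y) : ⁅x, q⁆ ∈ W := by
  induction hq using closure_induction with
  | mem y hy => exact hY y hy
  | one => simp
  | mul a b _ hb iha ihb =>
    have hmul : ⁅x, a * b⁆ = ⁅x, a⁆ * ⁅x, b⁆ := by
      rw [commutatorElement_mul_right_eq_mul_conj, mul_assoc _ a, mem_center_iff.1 (hcent b hb) a]
      simp [mul_assoc]
    exact hmul ▸ mul_mem iha ihb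
  | inv a ha iha =>
    have hinv : ⁅x, a⁻¹⁆ = ⁅x, a⁆⁻¹ := by
      rw [commutatorElement_inv_right, ← commutatorElement_inv,
        mem_center_iff.1 (inv_mem (hcent a ha)) a⁻¹, inv_mul_cancel_right]
    exact hinv ▸ inv_mem iha

theorem commutator_closure_le_closure_image2 {X Y : Set G}
    (h : ⁅closure X, closure Y⁆ ≤ center G) :
    ⁅closure X, closure Y⁆ ≤ closure (Set.image2 (⁅·, ·⁆) X Y) := by
  have hcent : ∀ p ∈ closure X, ∀ q ∈ closure Y, ⁅p, q⁆ ∈ center G :=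
    fun p hp q hq => h (commutator_mem_commutator hp hq)
  have hX : ∀ x ∈ X, ∀ q ∈ closure Y, ⁅x, q⁆ ∈ closure (Set.image2 (⁅·, ·⁆) X Y) :=
    fun x hx q hq => commutatorElement_mem_of_mem_closure (hcent x (subset_closure hx))
      (fun y hy => subset_closure (Set.mem_image2_of_mem hx hy)) hq
  refine commutator_le.2 fun p hp q hq => ?_
  rw [← commutatorElement_inv]
  refine inv_mem (commutatorElement_mem_of_mem_closure (fun p' hp' => ?_) (fun x hx => ?_) hp)
  · exact commutatorElement_inv p' q ▸ inv_mem (hcent p' hp' q hq)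
  · exact commutatorElement_inv x q ▸ inv_mem (hX x hx q hq)

theorem commutator_closure_le_closure_image2_sup {M : Subgroup G} [M.Normal] {X Y : Set G}
    (h : ⁅⁅closure X, closure Y⁆, ⊤⁆ ≤ M) :
    ⁅closure X, closure Y⁆ ≤ closure (Set.image2 (⁅·, ·⁆) X Y) ⊔ M := by
  let π := QuotientGroup.mk' M
  have hmap : ⁅closure (π '' X), closure (π '' Y)⁆ = ⁅closure X, closure Y⁆.map π := by
    rw [map_commutator, MonoidHom.map_closure, MonoidHom.map_closure]
  have hcent : ⁅closure (π '' X), closure (π '' Y)⁆ ≤ center (G ⧸ M) := by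
    rw [← commutator_top_right_eq_bot_iff_le_center, hmap,
      ← map_top_of_surjective π (QuotientGroup.mk'_surjective M), ← map_commutator,
      Subgroup.map_eq_bot_iff, QuotientGroup.ker_mk']
    exact h
  have hle := commutator_closure_le_closure_image2 hcent
  rw [hmap, Set.image2_image_left, Set.image2_image_right] at hle
  simp_rw [← map_commutatorElement π] at hle
  rw [← Set.image_image2, ← MonoidHom.map_closure, map_le_map_iff', QuotientGroup.ker_mk'] at hle
  exact le_sup_left.trans hle

end Commutator

section IteratedCommutators

variable {G : Type*} [Group G] [DecidableEq G]

def iteratedCommutators (T : Finset G) : ℕ → Finset G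
  | 0 => T
  | i + 1 => Finset.image₂ (⁅·, ·⁆) (iteratedCommutators T i) T

theorem card_iteratedCommutators_le (T : Finset G) (i : ℕ) :
    (iteratedCommutators T i).card ≤ T.card ^ (i + 1) := by
  induction i with
  | zero => simp [iteratedCommutators]
  | succ i ih =>
    calc (iteratedCommutators T (i + 1)).card ≤ (iteratedCommutators T i).card * T.card :=
          Finset.card_image₂_le _ _ _
      _ ≤ T.card ^ (i + 1) * T.card := Nat.mul_le_mul_right _ ih
      _ = T.card ^ (i + 2) := (pow_succ _ _).symm

theorem iteratedCommutators_subset_lowerCentralSeries (T : Finset G) {S : Subgroup G}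
    (hT : (T : Set G) ⊆ S) (i : ℕ) :
    (iteratedCommutators T i : Set G) ⊆ S.lowerCentralSeries i := by
  induction i with
  | zero => exact hT
  | succ i ih =>
    rw [iteratedCommutators, Finset.coe_image₂]
    rintro _ ⟨a, ha, t, ht, rfl⟩
    exact commutator_mem_commutator (ih ha) (hT ht)

theorem lowerCentralSeries_le_closure_iteratedCommutators_sup {T : Finset G}
    (hT : closure (T : Set G) = ⊤) (i : ℕ) :
    (⊤ : Subgroup G).lowerCentralSeries i ≤
      closure (iteratedCommutators T i : Set G) ⊔ (⊤ : Subgroup G).lowerCentralSeries (i + 1) := by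
  set γ := (⊤ : Subgroup G).lowerCentralSeries
  induction i with
  | zero => exact hT ▸ le_sup_left
  | succ i ih =>
    set X := (iteratedCommutators T i : Set G) ∪ γ (i + 1)
    have hXγ : closure X ≤ γ i := (closure_le _).2 <| Set.union_subset
      (iteratedCommutators_subset_lowerCentralSeries T (Set.subset_univ _) i)
      (Subgroup.lowerCentralSeries_antitone _ i.le_succ)
    have hX : γ i ≤ closure X := by rwa [Subgroup.closure_union, closure_eq]
    calc γ (i + 1) = ⁅γ i, closure (T : Set G)⁆ := by rw [hT]; rfl
      _ ≤ ⁅closure X, closure (T : Set G)⁆ := commutator_mono hX le_rfl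
      _ ≤ Subgroup.closure (Set.image2 (⁅·, ·⁆) X T) ⊔ γ (i + 2) :=
          commutator_closure_le_closure_image2_sup <| by
            rw [hT]; exact commutator_mono (commutator_mono hXγ le_rfl) le_rfl
      _ ≤ Subgroup.closure (iteratedCommutators T (i + 1) : Set G) ⊔ γ (i + 2) := by
          refine sup_le ((closure_le _).2 ?_) le_sup_right
          rw [Set.image2_union_left, iteratedCommutators, Finset.coe_image₂]
          refine Set.union_subset (subset_closure.trans (SetLike.coe_subset_coe.2 le_sup_left)) ?_
          rintro _ ⟨a, ha, t, -, rfl⟩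
          exact mem_sup_right (commutator_mem_commutator ha (mem_top t))

theorem closure_iteratedCommutators_eq {T : Finset G} (hT : closure (T : Set G) = ⊤) {n : ℕ}
    (hn : (⊤ : Subgroup G).lowerCentralSeries (n + 1) = ⊥) :
    closure (iteratedCommutators T n : Set G) = (⊤ : Subgroup G).lowerCentralSeries n :=
  le_antisymm ((closure_le _).2 (iteratedCommutators_subset_lowerCentralSeries T
    (Set.subset_univ _) n))
    ((lowerCentralSeries_le_closure_iteratedCommutators_sup hT n).trans_eq (by rw [hn, sup_bot_eq]))

end IteratedCommutators

theorem lowerCentralSeries_quotient_eq_bot {G : Type*} [Group G] {M : Subgroup G} [M.Normal]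
    {n : ℕ} (h : (⊤ : Subgroup G).lowerCentralSeries n ≤ M) :
    (⊤ : Subgroup (G ⧸ M)).lowerCentralSeries n = ⊥ := by
  rw [← map_top_of_surjective _ (QuotientGroup.mk'_surjective M), ← map_lowerCentralSeries,
    Subgroup.map_eq_bot_iff, QuotientGroup.ker_mk']
  exact h

theorem Nat.sum_range_pow_succ_eq_div {k : ℕ} (hk : 2 ≤ k) (n : ℕ) :
    ∑ i ∈ Finset.range n, k ^ (i + 1) = (k ^ (n + 1) - k) / (k - 1) := by
  rw [show ∑ i ∈ Finset.range n, k ^ (i + 1) = k * ∑ i ∈ Finset.range n, k ^ i by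
      simp [pow_succ', Finset.mul_sum], Nat.geomSum_eq hk,
    ← Nat.mul_div_assoc _ (Nat.sub_one_dvd_pow_sub_one k n), Nat.mul_sub_one, pow_succ']

theorem exists_finset_closure_eq_card_le_sum_pow {N : Type*} [Group N] (n : ℕ)
    (hnil : (⊤ : Subgroup N).lowerCentralSeries n = ⊥) {k : ℕ} {T : Finset N}
    (hT : closure (T : Set N) = ⊤) (hTk : T.card ≤ k) (H : Subgroup N) :
    ∃ S : Finset N, closure (S : Set N) = H ∧ S.card ≤ ∑ i ∈ Finset.range n, k ^ (i + 1) := by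
  classical
  induction n generalizing N with
  | zero =>
    refine ⟨∅, ?_, by simp⟩
    rw [Finset.coe_empty, Subgroup.closure_empty, eq_comm, ← le_bot_iff, ← hnil]
    exact le_top
  | succ n ih =>
    set Z := (⊤ : Subgroup N).lowerCentralSeries n
    have hZ : closure (iteratedCommutators T n : Set N) = Z :=
      closure_iteratedCommutators_eq hT hnil
    have hZcenter : Z ≤ center N := commutator_top_right_eq_bot_iff_le_center.1 hnil
    obtain ⟨S₂, hS₂, hS₂card⟩ := exists_finset_closure_eq_card_le_of_le_closure_of_comm
      (iteratedCommutators T n)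
      (fun x hx y _ => (mem_center_iff.1 (hZcenter (hZ ▸ subset_closure hx)) y).symm)
      (H := H ⊓ Z) (hZ ▸ inf_le_right)
    let π := QuotientGroup.mk' Z
    have hTQ : closure ((T.image π : Finset (N ⧸ Z)) : Set (N ⧸ Z)) = ⊤ := by
      rw [Finset.coe_image, ← MonoidHom.map_closure, hT,
        map_top_of_surjective π (QuotientGroup.mk'_surjective Z)]
    obtain ⟨S₁, hS₁, hS₁card⟩ := ih (lowerCentralSeries_quotient_eq_bot le_rfl) hTQ
      (Finset.card_image_le.trans hTk) (H.map π)
    obtain ⟨S, hS, hScard⟩ :=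
      exists_finset_closure_eq_card_le_add π hS₁ (by rwa [QuotientGroup.ker_mk'])
    refine ⟨S, hS, hScard.trans ?_⟩
    rw [Finset.sum_range_succ]
    exact Nat.add_le_add hS₁card <| hS₂card.trans <|
      (card_iteratedCommutators_le T n).trans (Nat.pow_le_pow_left hTk _)

/-- if `N` is a nilpotent group of nilpotency class at most `n`
(i.e. the `n`-th term of its lower central series is trivial) generated by `k ≥ 2`
elements, then every subgroup `H` of `N` is generated by at most
`(k^(n+1) − k)/(k − 1) = k + k² + … + kⁿ` elements. -/
theorem subgroup_genLE_of_nilpotent {N : Type*} [Group N] (n : ℕ)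
    (hnil : (⊤ : Subgroup N).lowerCentralSeries n = ⊥) (k : ℕ) (hk : 2 ≤ k)
    (T : Finset N) (hT : Subgroup.closure (T : Set N) = ⊤) (hTcard : T.card ≤ k)
    (H : Subgroup N) :
    ∃ S : Finset N, Subgroup.closure (S : Set N) = H ∧
      S.card ≤ (k ^ (n + 1) - k) / (k - 1) := by
  obtain ⟨S, hS, hcard⟩ := exists_finset_closure_eq_card_le_sum_pow n hnil hT hTcard H
  exact ⟨S, hS, hcard.trans_eq (Nat.sum_range_pow_succ_eq_div hk n)⟩
end

section
/- Let F be the free group on the alphabet {a, b, c, d, e} and fix n ≥ 2. Let H_1 = ⟨acb⁻¹, ac⁻¹b⁻¹, adb⁻¹, ad⁻¹b⁻¹⟩ and, for i = 2, ..., n, let H_i = ⟨H_1, ab⁻¹, a e^{2^{n−i}} b⁻¹⟩. Then H_1 < H_2 < ... < H_n is a strictly ascending chain of subgroups of F, and every subgroup H_i (1 ≤ i ≤ n) has rank exactly 4. -/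
namespace ChainExample

abbrev F := FreeGroup (Fin 5)

def a : F := FreeGroup.of 0
def b : F := FreeGroup.of 1
def c : F := FreeGroup.of 2
def d : F := FreeGroup.of 3
def e : F := FreeGroup.of 4

end ChainExample

section Rank

variable {G M : Type*} [Group G] [Group M]

theorem Subgroup.rk_eq_of_card_le {K : Subgroup G} {m : ℕ} (S : Finset G)
    (hS : Subgroup.closure (S : Set G) = K) (hSm : S.card ≤ m)
    (h : ∀ T : Finset G, Subgroup.closure (T : Set G) = K → m ≤ T.card) : K.rk = m :=
  IsLeast.csInf_eq ⟨⟨S, hS, hSm.antisymm (h S hS)⟩, by rintro _ ⟨T, hT, rfl⟩; exact h T hT⟩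

variable {R ι : Type*} [Ring R] [StrongRankCondition R] [Fintype ι] [DecidableEq ι]

theorem card_le_card_of_single_mem_closure (T : Finset (Multiplicative (ι → R)))
    (hT : ∀ i, Multiplicative.ofAdd (Pi.single i (1 : R)) ∈
      Subgroup.closure (T : Set (Multiplicative (ι → R)))) :
    Fintype.card ι ≤ T.card := by
  classical
  set s := T.image Multiplicative.toAdd
  have hclosure : Subgroup.closure (T : Set _) ≤
      (Submodule.span R (s : Set (ι → R))).toAddSubgroup.toSubgroup :=
    (Subgroup.closure_le _).2 fun t ht => show t.toAdd ∈ Submodule.span R (s : Set (ι → R)) from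
      Submodule.subset_span (Finset.mem_coe.2 (Finset.mem_image_of_mem _ ht))
  have hspan : Submodule.span R (s : Set (ι → R)) = ⊤ := by
    rw [eq_top_iff, ← (Pi.basisFun R ι).span_eq, Submodule.span_le]
    rintro _ ⟨i, rfl⟩
    rw [Pi.basisFun_apply]
    exact hclosure (hT i)
  calc Fintype.card ι = Module.finrank R (ι → R) := (Module.finrank_fintype_fun_eq_card R).symm
    _ = (s : Set (ι → R)).finrank R := by rw [Set.finrank, hspan, finrank_top]
    _ ≤ s.card := finrank_span_finset_le_card s
    _ ≤ T.card := Finset.card_image_le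

theorem card_le_card_of_single_mem_map (f : G →* M) (j : Multiplicative (ι → R) →* M)
    (hj : Function.Injective j) {K : Subgroup G} (hK : K.map f ≤ j.range)
    (hsingle : ∀ i, j (.ofAdd (Pi.single i 1)) ∈ K.map f) {S : Finset G}
    (hS : Subgroup.closure (S : Set G) = K) : Fintype.card ι ≤ S.card := by
  classical
  have hmap : Subgroup.closure ((S.image f : Finset M) : Set M) = K.map f := by
    rw [Finset.coe_image, ← MonoidHom.map_closure, hS]
  obtain ⟨T, -, hT⟩ := Finset.subset_set_image_iff.1 <| show ↑(S.image f) ⊆ j '' Set.univ by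
    rw [Set.image_univ, ← MonoidHom.coe_range]
    exact (Subgroup.closure_le _).1 (hmap.le.trans hK)
  calc Fintype.card ι ≤ T.card := card_le_card_of_single_mem_closure T fun i => by
        rw [← Subgroup.mem_map_iff_mem hj, MonoidHom.map_closure, ← Finset.coe_image, hT, hmap]
        exact hsingle i
    _ = (S.image f).card := by rw [← hT, Finset.card_image_of_injective _ hj]
    _ ≤ S.card := Finset.card_image_le

end Rank

namespace ChainExample

open Subgroup

def H₁ : Subgroup F := closure {a * c * b⁻¹, a * c⁻¹ * b⁻¹, a * d * b⁻¹, a * d⁻¹ * b⁻¹}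

def J (m : ℕ) : Subgroup F := H₁ ⊔ closure {a * b⁻¹, a * e ^ m * b⁻¹}

lemma H₁_le_J (m : ℕ) : H₁ ≤ J m := le_sup_left

lemma a_mul_b_inv_mem_J {m : ℕ} : a * b⁻¹ ∈ J m := mem_sup_right (subset_closure (by simp))

lemma a_mul_e_pow_mul_b_inv_mem_J {m : ℕ} : a * e ^ m * b⁻¹ ∈ J m :=
  mem_sup_right (subset_closure (by simp))

lemma a_mul_mul_a_inv_mem_J {m : ℕ} {x : F} (hx : a * x * b⁻¹ ∈ J m) : a * x * a⁻¹ ∈ J m := by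
  have : a * x * a⁻¹ = (a * x * b⁻¹) * (a * b⁻¹)⁻¹ := by group
  rw [this]
  exact mul_mem hx (inv_mem a_mul_b_inv_mem_J)

def acdParity : F →* Multiplicative (ZMod 2) :=
  FreeGroup.lift ![.ofAdd 1, 1, .ofAdd 1, .ofAdd 1, 1]

lemma a_mul_b_inv_notMem_H₁ : a * b⁻¹ ∉ H₁ := by
  have hker : H₁ ≤ acdParity.ker := by
    rw [H₁, closure_le]
    rintro x (rfl | rfl | rfl | rfl) <;> exact MonoidHom.mem_ker.2 (by decide)
  exact fun h => absurd (hker h) (by decide)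

lemma H₁_lt_J (m : ℕ) : H₁ < J m :=
  SetLike.lt_iff_le_and_exists.2 ⟨H₁_le_J m, _, a_mul_b_inv_mem_J, a_mul_b_inv_notMem_H₁⟩

def eExponentMod (m : ℕ) : F →* Multiplicative (ZMod m) :=
  FreeGroup.lift ![1, 1, 1, 1, .ofAdd 1]

lemma eExponentMod_a_mul_e_pow_mul_b_inv (m k : ℕ) :
    eExponentMod m (a * e ^ k * b⁻¹) = .ofAdd (k : ZMod m) := by
  simp [eExponentMod, a, b, e, ← ofAdd_nsmul]

lemma dvd_of_a_mul_e_pow_mul_b_inv_mem_J {m k : ℕ} (h : a * e ^ k * b⁻¹ ∈ J m) : m ∣ k := by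
  have hker : J m ≤ (eExponentMod m).ker := by
    refine sup_le ((closure_le _).2 ?_) ((closure_le _).2 ?_)
    · rintro x (rfl | rfl | rfl | rfl) <;> simp [eExponentMod, a, b, c, d]
    · rintro x (rfl | rfl)
      · simp [eExponentMod, a, b]
      · simp [eExponentMod_a_mul_e_pow_mul_b_inv]
  have := hker h
  rwa [MonoidHom.mem_ker, eExponentMod_a_mul_e_pow_mul_b_inv, ofAdd_eq_one,
    ZMod.natCast_eq_zero_iff] at this

lemma J_two_mul_le (m : ℕ) : J (2 * m) ≤ J m := by
  refine sup_le (H₁_le_J m) ((closure_le _).2 ?_)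
  rintro x (rfl | rfl)
  · exact a_mul_b_inv_mem_J
  · have : a * e ^ (2 * m) * b⁻¹ = (a * e ^ m * b⁻¹) * (a * b⁻¹)⁻¹ * (a * e ^ m * b⁻¹) := by
      rw [two_mul, pow_add]; group
    rw [this]
    exact mul_mem (mul_mem a_mul_e_pow_mul_b_inv_mem_J (inv_mem a_mul_b_inv_mem_J))
      a_mul_e_pow_mul_b_inv_mem_J

lemma J_two_mul_lt {m : ℕ} (hm : 0 < m) : J (2 * m) < J m :=
  SetLike.lt_iff_le_and_exists.2 ⟨J_two_mul_le m, _, a_mul_e_pow_mul_b_inv_mem_J, fun h =>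
    absurd (Nat.le_of_dvd hm (dvd_of_a_mul_e_pow_mul_b_inv_mem_J h)) (by omega)⟩

open DihedralGroup in
def klein : Multiplicative (Fin 4 → ZMod 2) →* DihedralGroup 4 × DihedralGroup 4 :=
  MonoidHom.mk' (fun x => (sr 0 ^ (x.toAdd 0).val * sr 2 ^ (x.toAdd 1).val,
    sr 0 ^ (x.toAdd 2).val * sr 2 ^ (x.toAdd 3).val)) (by decide)

lemma klein_injective : Function.Injective klein := by decide

open DihedralGroup in
def dihedralRep : F →* DihedralGroup 4 × DihedralGroup 4 :=
  FreeGroup.lift ![1, (sr 3, sr 3), (r 3, sr 3), (sr 3, r 3), 1]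

lemma dihedralRep_gen : ∀ i : Fin 4,
    dihedralRep (![a * c * b⁻¹, a * c⁻¹ * b⁻¹, a * d * b⁻¹, a * d⁻¹ * b⁻¹] i) =
      klein (.ofAdd (Pi.single i 1)) := by
  decide

lemma rk_H₁ : H₁.rk = 4 := by
  classical
  refine rk_eq_of_card_le {a * c * b⁻¹, a * c⁻¹ * b⁻¹, a * d * b⁻¹, a * d⁻¹ * b⁻¹}
    (by simp [H₁]) Finset.card_le_four fun T hT => ?_
  have hrange : H₁.map dihedralRep ≤ klein.range := by
    rw [H₁, MonoidHom.map_closure, closure_le]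
    rintro _ ⟨x, hx | hx | hx | hx, rfl⟩ <;> subst hx
    exacts [⟨_, (dihedralRep_gen 0).symm⟩, ⟨_, (dihedralRep_gen 1).symm⟩,
      ⟨_, (dihedralRep_gen 2).symm⟩, ⟨_, (dihedralRep_gen 3).symm⟩]
  have hsingle : ∀ i, klein (.ofAdd (Pi.single i 1)) ∈ H₁.map dihedralRep := fun i =>
    ⟨_, subset_closure (by fin_cases i <;> simp), dihedralRep_gen i⟩
  simpa using card_le_card_of_single_mem_map dihedralRep klein klein_injective hrange hsingle hT

lemma closure_eq_J (m : ℕ) :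
    closure {a * c * b⁻¹, a * d * b⁻¹, a * b⁻¹, a * e ^ m * b⁻¹} = J m := by
  set L := closure {a * c * b⁻¹, a * d * b⁻¹, a * b⁻¹, a * e ^ m * b⁻¹}
  have hab : a * b⁻¹ ∈ L := subset_closure (by simp)
  have hinv : ∀ x, a * x * b⁻¹ ∈ L → a * x⁻¹ * b⁻¹ ∈ L := fun x hx => by
    have : a * x⁻¹ * b⁻¹ = (a * b⁻¹) * (a * x * b⁻¹)⁻¹ * (a * b⁻¹) := by group
    rw [this]
    exact mul_mem (mul_mem hab (inv_mem hx)) hab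
  have hacb : a * c * b⁻¹ ∈ L := subset_closure (by simp)
  have hadb : a * d * b⁻¹ ∈ L := subset_closure (by simp)
  refine le_antisymm ((closure_le _).2 ?_) (sup_le ((closure_le _).2 ?_) ((closure_le _).2 ?_))
  · rintro x (rfl | rfl | rfl | rfl)
    exacts [H₁_le_J m (subset_closure (by simp)), H₁_le_J m (subset_closure (by simp)),
      a_mul_b_inv_mem_J, a_mul_e_pow_mul_b_inv_mem_J]
  · rintro x (rfl | rfl | rfl | rfl)
    exacts [hacb, hinv _ hacb, hadb, hinv _ hadb]
  · rintro x (rfl | rfl) <;> exact subset_closure (by simp)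

def modRep (p : ℕ) : F →* Multiplicative (Fin 4 → ZMod p) :=
  FreeGroup.lift ![.ofAdd (Pi.single 3 1), 1, .ofAdd (Pi.single 0 1), .ofAdd (Pi.single 1 1),
    .ofAdd (Pi.single 2 1)]

lemma modRep_a_mul_e_pow_mul_a_inv (p m : ℕ) :
    modRep p (a * e ^ m * a⁻¹) = .ofAdd (Pi.single 2 (m : ZMod p)) := by
  rw [map_mul, map_mul, map_inv, mul_inv_cancel_comm, map_pow,
    show modRep p e = .ofAdd (Pi.single 2 1) from FreeGroup.lift_apply_of, ← ofAdd_nsmul,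
    ← Pi.single_smul', nsmul_eq_mul, mul_one]

lemma single_mem_map_modRep {p m : ℕ} [Fact p.Prime] (hpm : ¬ p ∣ m) (i : Fin 4) :
    .ofAdd (Pi.single i 1) ∈ (J m).map (modRep p) := by
  have hm : (m : ZMod p) ≠ 0 := by rwa [Ne, ZMod.natCast_eq_zero_iff]
  fin_cases i
  · exact ⟨a * c * a⁻¹, a_mul_mul_a_inv_mem_J (H₁_le_J m (subset_closure (by simp))),
      by simp [modRep, a, c]⟩
  · exact ⟨a * d * a⁻¹, a_mul_mul_a_inv_mem_J (H₁_le_J m (subset_closure (by simp))),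
      by simp [modRep, a, d]⟩
  · refine ⟨(a * e ^ m * a⁻¹) ^ (m : ZMod p)⁻¹.val,
      pow_mem (a_mul_mul_a_inv_mem_J a_mul_e_pow_mul_b_inv_mem_J) _, ?_⟩
    rw [map_pow, modRep_a_mul_e_pow_mul_a_inv, ← ofAdd_nsmul, ← Pi.single_smul', nsmul_eq_mul,
      ZMod.natCast_zmod_val, inv_mul_cancel₀ hm]
    rfl
  · exact ⟨a * b⁻¹, a_mul_b_inv_mem_J, by simp [modRep, a, b]⟩

lemma rk_J {p m : ℕ} [Fact p.Prime] (hpm : ¬ p ∣ m) : (J m).rk = 4 := by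
  classical
  refine rk_eq_of_card_le {a * c * b⁻¹, a * d * b⁻¹, a * b⁻¹, a * e ^ m * b⁻¹}
    (by push_cast; exact closure_eq_J m) Finset.card_le_four fun T hT => ?_
  simpa using card_le_card_of_single_mem_map (modRep p) (MonoidHom.id _) Function.injective_id
    (fun x _ => ⟨x, rfl⟩) (single_mem_map_modRep hpm) hT

theorem strict_chain_of_rank_four_general (n : ℕ) (H : ℕ → Subgroup F)
    (hH1 : H 1 = Subgroup.closure
      {a * c * b⁻¹, a * c⁻¹ * b⁻¹, a * d * b⁻¹, a * d⁻¹ * b⁻¹})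
    (hHi : ∀ i, 2 ≤ i → i ≤ n →
      H i = H 1 ⊔ Subgroup.closure {a * b⁻¹, a * e ^ (2 ^ (n - i)) * b⁻¹}) :
    (∀ i, 1 ≤ i → i < n → H i < H (i + 1)) ∧
      (∀ i, 1 ≤ i → i ≤ n → (H i).rk = 4) := by
  have hH₁ : H 1 = H₁ := hH1
  have hJ : ∀ i, 2 ≤ i → i ≤ n → H i = J (2 ^ (n - i)) := fun i hi hin => by
    rw [hHi i hi hin, hH₁]
    rfl
  refine ⟨fun i hi hin => ?_, fun i hi hin => ?_⟩
  · obtain rfl | hi := hi.eq_or_lt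
    · rw [hH₁, hJ 2 le_rfl hin]
      exact H₁_lt_J _
    · rw [hJ i hi hin.le, hJ (i + 1) (by omega) hin, show n - i = n - (i + 1) + 1 by omega, pow_succ']
      exact J_two_mul_lt (by positivity)
  · obtain rfl | hi := hi.eq_or_lt
    · rw [hH₁]
      exact rk_H₁
    · rw [hJ i hi hin]
      exact rk_J (p := 3) fun h => by have := Nat.prime_three.dvd_of_dvd_pow h; omega

/-- in the free group `F` on `{a,b,c,d,e}`, fix `n ≥ 2`, let
`H 1 = ⟨acb⁻¹, ac⁻¹b⁻¹, adb⁻¹, ad⁻¹b⁻¹⟩` and, for `2 ≤ i ≤ n`,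
`H i = ⟨H 1, ab⁻¹, a e^(2^(n−i)) b⁻¹⟩`. Then `H 1 < H 2 < … < H n` is a strictly
ascending chain and each `H i` (for `1 ≤ i ≤ n`) has rank exactly `4`. -/
theorem strict_chain_of_rank_four (n : ℕ) (hn : 2 ≤ n) (H : ℕ → Subgroup F)
    (hH1 : H 1 = Subgroup.closure
      {a * c * b⁻¹, a * c⁻¹ * b⁻¹, a * d * b⁻¹, a * d⁻¹ * b⁻¹})
    (hHi : ∀ i, 2 ≤ i → i ≤ n →
      H i = H 1 ⊔ Subgroup.closure {a * b⁻¹, a * e ^ (2 ^ (n - i)) * b⁻¹}) :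
    (∀ i, 1 ≤ i → i < n → H i < H (i + 1)) ∧
      (∀ i, 1 ≤ i → i ≤ n → (H i).rk = 4) :=
  strict_chain_of_rank_four_general n H hH1 hHi

end ChainExample
end

section
/- Let G be a group that is a Takahasi group, let φ be an endomorphism of G, and suppose there is a natural number M such that for every n ≥ 1 the fixed subgroup Fix(φⁿ) = { x ∈ G : φⁿ(x) = x } is generated by at most M elements. Then there exists k ≥ 1 such that Per(φ) = Fix(φ^{k!}); in particular, the periodic subgroup Per(φ) = ⋃_{n ≥ 1} Fix(φⁿ) is a subgroup of G generated by at most M elements. -/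
/-- A group `G` is a Takahasi group if for every `M : ℕ`, every ascending chain of
subgroups of `G`, each generated by at most `M` elements, is eventually constant. -/
def IsTakahasiGroup (G : Type*) [Group G] : Prop :=
  ∀ M : ℕ, ∀ H : ℕ → Subgroup G, (∀ i, H i ≤ H (i + 1)) →
    (∀ i, ∃ S : Finset G, Subgroup.closure (S : Set G) = H i ∧ S.card ≤ M) →
    ∃ p, ∀ i, p ≤ i → H i = H p

/-- The fixed subgroup `Fix(φ) = {x ∈ G : φ(x) = x}` of an endomorphism `φ`. -/
def fixedSubgroup {G : Type*} [Group G] (φ : Monoid.End G) : Subgroup G where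
  carrier := {x | φ x = x}
  one_mem' := map_one φ
  mul_mem' := by
    intro x y hx hy
    simp only [Set.mem_setOf_eq] at *
    rw [map_mul, hx, hy]
  inv_mem' := by
    intro x hx
    simp only [Set.mem_setOf_eq] at *
    rw [map_inv, hx]

/-- The periodic set `Per(φ) = ⋃_{n ≥ 1} Fix(φⁿ)` of an endomorphism `φ`. -/
def perSet {G : Type*} [Group G] (φ : Monoid.End G) : Set G :=
  {x | ∃ n, 1 ≤ n ∧ (φ ^ n) x = x}

section

variable {G : Type*} [Group G] (φ : Monoid.End G)

lemma fixedSubgroup_pow_le_of_dvd {a b : ℕ} (h : a ∣ b) :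
    fixedSubgroup (φ ^ a) ≤ fixedSubgroup (φ ^ b) := by
  obtain ⟨c, rfl⟩ := h
  intro x (hx : (φ ^ a) x = x)
  show (φ ^ (a * c)) x = x
  rw [pow_mul, Monoid.End.coe_pow]
  exact Function.IsFixedPt.iterate hx c

lemma monotone_fixedSubgroup_pow_factorial :
    Monotone fun k : ℕ => fixedSubgroup (φ ^ k.factorial) :=
  fun _ _ hkl => fixedSubgroup_pow_le_of_dvd φ (Nat.factorial_dvd_factorial hkl)

lemma mem_perSet_iff_exists_factorial {x : G} :
    x ∈ perSet φ ↔ ∃ k : ℕ, x ∈ fixedSubgroup (φ ^ k.factorial) := by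
  refine ⟨fun ⟨n, hn, hx⟩ => ⟨n, ?_⟩, fun ⟨k, hx⟩ => ⟨k.factorial, k.factorial_pos, hx⟩⟩
  exact fixedSubgroup_pow_le_of_dvd φ (Nat.dvd_factorial hn le_rfl) hx

end

/-- if `G` is a Takahasi group, `φ` is an endomorphism of `G` and `M` is
such that `Fix(φⁿ)` is generated by at most `M` elements for every `n ≥ 1`, then
`Per(φ) = Fix(φ^(k!))` for some `k ≥ 1`; in particular `Per(φ)` is a subgroup of `G`
generated by at most `M` elements. -/
theorem perSet_eq_fixedSubgroup_of_takahasi {G : Type*} [Group G]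
    (hG : IsTakahasiGroup G) (φ : Monoid.End G) (M : ℕ)
    (hfix : ∀ n, 1 ≤ n →
      ∃ S : Finset G, Subgroup.closure (S : Set G) = fixedSubgroup (φ ^ n) ∧ S.card ≤ M) :
    ∃ k, 1 ≤ k ∧ perSet φ = ↑(fixedSubgroup (φ ^ Nat.factorial k)) ∧
      ∃ S : Finset G, Subgroup.closure (S : Set G) = fixedSubgroup (φ ^ Nat.factorial k) ∧
        S.card ≤ M := by
  have hmono := monotone_fixedSubgroup_pow_factorial φ
  obtain ⟨p, hp⟩ := hG M (fun k => fixedSubgroup (φ ^ k.factorial)) (fun k => hmono k.le_succ)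
    (fun k => hfix _ k.factorial_pos)
  refine ⟨p + 1, p.succ_pos, ?_, hfix _ (p + 1).factorial_pos⟩
  rw [hp (p + 1) p.le_succ]
  ext x
  refine ⟨fun hx => ?_, fun hx => mem_perSet_iff_exists_factorial φ |>.2 ⟨p, hx⟩⟩
  obtain ⟨k, hk⟩ := mem_perSet_iff_exists_factorial φ |>.1 hx
  rw [SetLike.mem_coe, ← hp (max k p) (le_max_right k p)]
  exact hmono (le_max_left k p) hk
end

section
/- Let F be a free group and let K_1 ≤ K_2 ≤ K_3 ≤ ... be an ascending chain of finitely generated subgroups of F. If there is a natural number M such that rk(K_i) ≤ M for all i, then the chain is stationary, i.e., there exists p such that K_p = K_{p+1} = K_{p+2} = ... (Takahasi's Theorem). -/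
/-!
The union `L` of the chain is a subgroup of a free group, hence free (Nielsen–Schreier).
Finitely many elements of a basis of `L` all lie in a single `K n`, which is generated by at
most `M` elements. Mapping `L` to the `ℚ`-vector space on its basis sends these basis elements
to linearly independent vectors in the span of at most `M` vectors, so there are at most `M`
of them. Hence `L` has a finite basis, so it is finitely generated, and its finitely many
generators all lie in some `K p`, which forces `K p = L`.
-/

open Subgroup

theorem Subgroup.mem_closure_preimage_subtype {G : Type*} [Group G] {L : Subgroup G} {s : Set G}
    (hs : s ⊆ L) {x : L} (hx : (x : G) ∈ closure s) :
    x ∈ closure (((↑) : L → G) ⁻¹' s) := by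
  rwa [← mem_map_iff_mem L.subtype_injective, MonoidHom.map_closure, coe_subtype,
    Set.image_preimage_eq_of_subset (by simpa using hs)]

theorem MonoidHom.toAdd_mem_span_of_mem_closure {G V : Type*} (R : Type*) [Group G] [Ring R]
    [AddCommGroup V] [Module R V] (φ : G →* Multiplicative V) {s : Set G} {x : G}
    (hx : x ∈ closure s) :
    (φ x).toAdd ∈ Submodule.span R ((fun g ↦ (φ g).toAdd) '' s) := by
  induction hx using closure_induction with
  | mem x hx => exact Submodule.subset_span ⟨x, hx, rfl⟩
  | one => simp
  | mul x y _ _ hx hy => simpa using Submodule.add_mem _ hx hy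
  | inv x _ hx => simpa using Submodule.neg_mem _ hx

namespace IsFreeGroup

variable {G : Type*} [Group G] [IsFreeGroup G]

theorem card_le_card_of_forall_of_mem_closure {T : Finset (Generators G)} {S : Finset G}
    (h : ∀ t ∈ T, of t ∈ closure (S : Set G)) : T.card ≤ S.card := by
  classical
  let φ : G →* Multiplicative (Generators G →₀ ℚ) := lift fun t ↦ .ofAdd (.single t 1)
  let w : Finset (Generators G →₀ ℚ) := S.image fun g ↦ (φ g).toAdd
  have hT : Set.range (fun t : T ↦ Finsupp.single (t : Generators G) (1 : ℚ)) ⊆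
      Submodule.span ℚ (w : Set (Generators G →₀ ℚ)) := by
    rintro _ ⟨t, rfl⟩
    have := φ.toAdd_mem_span_of_mem_closure ℚ (h t t.2)
    rw [lift_of] at this
    simpa [w, Finset.coe_image] using this
  have hind : LinearIndependent ℚ fun t : T ↦ Finsupp.single (t : Generators G) (1 : ℚ) :=
    (Finsupp.linearIndependent_single_one ℚ (Generators G)).comp _ Subtype.val_injective
  calc T.card = Fintype.card T := (Fintype.card_coe T).symm
    _ ≤ Fintype.card (w : Set (Generators G →₀ ℚ)) :=
      linearIndependent_le_span_aux' _ hind _ hT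
    _ = w.card := by simp only [Finset.coe_sort_coe, Fintype.card_coe]
    _ ≤ S.card := Finset.card_image_le

theorem fg_of_forall_finset_exists_closure_card_le (M : ℕ)
    (h : ∀ T : Finset (Generators G),
      ∃ S : Finset G, S.card ≤ M ∧ ∀ t ∈ T, of t ∈ closure (S : Set G)) :
    Group.FG G := by
  have : Fintype (Generators G) := fintypeOfFinsetCardLe M fun T ↦ by
    obtain ⟨S, hSM, hS⟩ := h T
    exact (card_le_card_of_forall_of_mem_closure hS).trans hSM
  exact Group.fg_of_surjective (f := (toFreeGroup G).symm.toMonoidHom)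
    (toFreeGroup G).symm.surjective

end IsFreeGroup

theorem Subgroup.exists_forall_ge_eq_of_monotone_of_fg_iSup {G : Type*} [Group G]
    {K : ℕ → Subgroup G} (hK : Monotone K) (hfg : (⨆ i, K i).FG) :
    ∃ p, ∀ i, p ≤ i → K i = K p := by
  obtain ⟨S, hS⟩ := hfg
  have hmem : ∀ s ∈ S, ∃ n, s ∈ K n := fun s hs ↦
    (mem_iSup_of_directed hK.directed_le).1 (hS ▸ subset_closure hs)
  choose! n hn using hmem
  refine ⟨S.sup n, fun i hi ↦ le_antisymm ?_ (hK hi)⟩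
  calc K i ≤ ⨆ i, K i := le_iSup K i
    _ = closure S := hS.symm
    _ ≤ K (S.sup n) := (closure_le _).2 fun s hs ↦ hK (Finset.le_sup hs) (hn s hs)

theorem Subgroup.fg_iSup_of_directed_of_card_le {F ι : Type*} [Group F] [IsFreeGroup F]
    [Nonempty ι] {K : ι → Subgroup F} (hK : Directed (· ≤ ·) K) (M : ℕ)
    (hrk : ∀ i, ∃ S : Finset F, closure (S : Set F) = K i ∧ S.card ≤ M) :
    (⨆ i, K i).FG := by
  classical
  set L := ⨆ i, K i
  rw [← Group.fg_iff_subgroup_fg]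
  refine IsFreeGroup.fg_of_forall_finset_exists_closure_card_le M fun T ↦ ?_
  have hmem : ∀ t ∈ T, ∃ i, ((IsFreeGroup.of t : L) : F) ∈ K i :=
    fun t _ ↦ (mem_iSup_of_directed hK).1 (IsFreeGroup.of t).2
  choose! i hi using hmem
  obtain ⟨j, hij⟩ := hK.finset_le (T.image i)
  obtain ⟨S, hS, hSM⟩ := hrk j
  have hSL : (S : Set F) ⊆ L := (closure_le _).1 (hS ▸ le_iSup K j)
  refine ⟨S.preimage (↑) Subtype.val_injective.injOn, ?_, fun t ht ↦ ?_⟩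
  · exact (Finset.card_le_card_of_injOn Subtype.val (fun x hx ↦ Finset.mem_preimage.1 hx)
      Subtype.val_injective.injOn).trans hSM
  · rw [Finset.coe_preimage]
    refine mem_closure_preimage_subtype hSL ?_
    rw [hS]
    exact hij _ (Finset.mem_image_of_mem i ht) (hi t ht)

/-- Takahasi's Theorem: let `F` be a free group and
`K 0 ≤ K 1 ≤ K 2 ≤ …` an ascending chain of finitely generated subgroups of `F` of rank
at most `M` (each generated by at most `M` elements). Then the chain is stationary. -/
theorem takahasi {F : Type*} [Group F] [IsFreeGroup F] (M : ℕ) (K : ℕ → Subgroup F)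
    (hchain : ∀ i, K i ≤ K (i + 1))
    (hrk : ∀ i, ∃ S : Finset F, Subgroup.closure (S : Set F) = K i ∧ S.card ≤ M) :
    ∃ p, ∀ i, p ≤ i → K i = K p := by
  have hK : Monotone K := monotone_nat_of_le_succ hchain
  exact exists_forall_ge_eq_of_monotone_of_fg_iSup hK
    (fg_iSup_of_directed_of_card_le hK.directed_le M hrk)
end
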